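/- Let ℓ be an odd prime, n ≥ 1, and let d ∈ Z/ℓⁿZ be a unit whose reduction modulo ℓ is not a square in (Z/ℓZ)ˣ. If b ∈ Z/ℓⁿZ is such that b²·d is a square in Z/ℓⁿZ, then b is divisible by ℓ^{⌈n/2⌉}, i.e. b lies in the ideal ℓ^{⌈n/2⌉}·(Z/ℓⁿZ). -/
import Mathlib

lemma aux_stmt18 (ℓ : ℕ) (hℓ : ℓ.Prime) (D : ℤ)
    (hdns : ¬ ∃ t : ZMod ℓ, (D : ZMod ℓ) = t ^ 2) :
    ∀ n : ℕ, ∀ B S : ℤ, ((ℓ : ℤ) ^ n ∣ B ^ 2 * D - S ^ 2) →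
      (ℓ : ℤ) ^ ((n + 1) / 2) ∣ B := by
  haveI : Fact ℓ.Prime := ⟨hℓ⟩
  have hℓZ : Prime (ℓ : ℤ) := Nat.prime_iff_prime_int.1 hℓ
  have key1 : ∀ B S : ℤ, ((ℓ : ℤ) ∣ B ^ 2 * D - S ^ 2) → (ℓ : ℤ) ∣ B := by
    intro B S h
    by_contra hB
    have h0 : ((B ^ 2 * D - S ^ 2 : ℤ) : ZMod ℓ) = 0 :=
      (ZMod.intCast_zmod_eq_zero_iff_dvd _ _).mpr h
    push_cast at h0
    have hB0 : (B : ZMod ℓ) ≠ 0 := by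
      intro h'
      exact hB ((ZMod.intCast_zmod_eq_zero_iff_dvd _ _).mp h')
    apply hdns
    refine ⟨(S : ZMod ℓ) * (B : ZMod ℓ)⁻¹, ?_⟩
    have heq : (B : ZMod ℓ) ^ 2 * (D : ZMod ℓ) = (S : ZMod ℓ) ^ 2 := by
      linear_combination h0
    field_simp
    linear_combination heq
  intro n
  induction n using Nat.strong_induction_on with
  | _ n ih =>
    match n with
    | 0 => intro B S _; simpa using one_dvd B
    | 1 =>
      intro B S h
      simpa using key1 B S (by simp at h; exact h)
    | (k+2) =>
      intro B S h
      have hℓB : (ℓ : ℤ) ∣ B := key1 B S (dvd_trans (dvd_pow_self _ (by omega)) h)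
      have hℓS : (ℓ : ℤ) ∣ S := by
        apply hℓZ.dvd_of_dvd_pow (n := 2)
        have h1 : (ℓ : ℤ) ^ 2 ∣ B ^ 2 * D := by
          exact Dvd.dvd.mul_right (pow_dvd_pow_of_dvd hℓB 2) D
        have h2 : (ℓ : ℤ) ^ 2 ∣ B ^ 2 * D - S ^ 2 :=
          dvd_trans (pow_dvd_pow _ (by omega)) h
        have h3 : (ℓ : ℤ) ^ 2 ∣ S ^ 2 := by
          have : S ^ 2 = B ^ 2 * D - (B ^ 2 * D - S ^ 2) := by ring
          rw [this]; exact dvd_sub h1 h2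
        exact dvd_trans (dvd_pow_self (ℓ : ℤ) two_ne_zero) h3
      obtain ⟨B', rfl⟩ := hℓB
      obtain ⟨S', rfl⟩ := hℓS
      have hcancel : (ℓ : ℤ) ^ k ∣ B' ^ 2 * D - S' ^ 2 := by
        have hne : ((ℓ : ℤ) ^ 2) ≠ 0 := pow_ne_zero _ (by exact_mod_cast hℓ.ne_zero)
        have : (ℓ : ℤ) ^ (k + 2) ∣ (ℓ : ℤ) ^ 2 * (B' ^ 2 * D - S' ^ 2) := by
          have : ((ℓ : ℤ) * B') ^ 2 * D - ((ℓ : ℤ) * S') ^ 2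
              = (ℓ : ℤ) ^ 2 * (B' ^ 2 * D - S' ^ 2) := by ring
          rwa [this] at h
        rw [pow_add, mul_comm ((ℓ:ℤ)^k)] at this
        exact (mul_dvd_mul_iff_left hne).mp this
      have hB' : (ℓ : ℤ) ^ ((k + 1) / 2) ∣ B' := ih k (by omega) B' S' hcancel
      have : (ℓ : ℤ) ^ ((k + 1) / 2 + 1) ∣ (ℓ : ℤ) * B' := by
        rw [pow_succ]
        exact mul_dvd_mul hB' dvd_rfl |>.trans (by rw [mul_comm])
      have hexp : (k + 2 + 1) / 2 = (k + 1) / 2 + 1 := by omega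
      rw [hexp]
      exact this

/-- Let `ℓ` be an odd prime, `n ≥ 1`, and `d` a unit of `ℤ/ℓⁿℤ` whose
reduction mod `ℓ` is not a square.  If `b² · d` is a square in `ℤ/ℓⁿℤ`, then
`b ∈ ℓ^⌈n/2⌉ · (ℤ/ℓⁿℤ)`. -/
theorem stmt_18 (ℓ n : ℕ) (hℓ : ℓ.Prime) (hℓodd : ℓ ≠ 2) (hn : 1 ≤ n)
    (d : ZMod (ℓ ^ n)) (hd : IsUnit d)
    (hdns : ¬ ∃ s : ZMod ℓ,
      ZMod.castHom (dvd_pow_self ℓ (by omega : n ≠ 0)) (ZMod ℓ) d = s ^ 2)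
    (b : ZMod (ℓ ^ n)) (hb : ∃ s : ZMod (ℓ ^ n), b ^ 2 * d = s ^ 2) :
    ∃ c : ZMod (ℓ ^ n), b = (ℓ : ZMod (ℓ ^ n)) ^ ((n + 1) / 2) * c := by
  haveI : Fact ℓ.Prime := ⟨hℓ⟩
  haveI : NeZero (ℓ ^ n) := ⟨pow_ne_zero _ hℓ.ne_zero⟩
  obtain ⟨s, hs⟩ := hb
  set B : ℤ := (b.val : ℤ)
  set S : ℤ := (s.val : ℤ)
  set D : ℤ := (d.val : ℤ)
  have hDns : ¬ ∃ t : ZMod ℓ, (D : ZMod ℓ) = t ^ 2 := by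
    intro ⟨t, ht⟩
    apply hdns
    refine ⟨t, ?_⟩
    rw [← ht]
    simp [D, ZMod.castHom_apply, ZMod.natCast_val]
  have hdvd : (ℓ : ℤ) ^ n ∣ B ^ 2 * D - S ^ 2 := by
    have : ((B ^ 2 * D - S ^ 2 : ℤ) : ZMod (ℓ ^ n)) = 0 := by
      push_cast [B, S, D, ZMod.natCast_val, ZMod.cast_id]
      rw [sub_eq_zero]
      exact_mod_cast hs
    have := (ZMod.intCast_zmod_eq_zero_iff_dvd _ _).mp this
    exact_mod_cast this
  have hBdvd : (ℓ : ℤ) ^ ((n + 1) / 2) ∣ B := aux_stmt18 ℓ hℓ D hDns n B S hdvd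
  have hNat : ℓ ^ ((n + 1) / 2) ∣ b.val := Int.natCast_dvd_natCast.mp (by push_cast; exact hBdvd)
  obtain ⟨c, hc⟩ := hNat
  refine ⟨(c : ZMod (ℓ ^ n)), ?_⟩
  have : ((b.val : ℕ) : ZMod (ℓ ^ n)) = ((ℓ ^ ((n + 1) / 2) * c : ℕ) : ZMod (ℓ ^ n)) := by
    rw [← hc]
  rw [ZMod.natCast_val, ZMod.cast_id] at this
  rw [this]
  push_cast
  ring
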